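/- Fix 0 < p < ∞ and for 0 < ε < 1 define N_p(ε) = ((1/2π) ∫_{-π}^{π} |1 - ε e^{iθ}|^{-p} dθ)^{1/p}. Then N_p(ε) = 1 + (p/4) ε² + O(ε⁴) as ε → 0⁺; that is, the function ε ↦ N_p(ε) - 1 - (p/4)ε² is O(ε⁴) as ε → 0⁺. -/

import Mathlib

/-!
With `x = ε² - 2ε cos θ` one has `‖1 - ε e^{iθ}‖^{-p} = (1 + x)^{-p/2}` and `x = O(ε)` uniformly
in `θ`. Expanding the binomial series to third order with an `O(x⁴)` remainder and integrating
the resulting cubic in `cos θ` (odd powers of `cos` have mean zero) gives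
`N_p(ε)^p = 1 + (p²/4) ε² + O(ε⁴)`. Taking the `p`-th root with
`(1 + t)^{1/p} = 1 + t/p + O(t²)` yields the claim.
-/

open Complex Asymptotics

/-- The `H^p(𝕋)` norm of `z ↦ (1 - εz)⁻¹`. -/
noncomputable def Np (p : ℝ) (ε : ℝ) : ℝ :=
  ((1 / (2 * Real.pi)) * ∫ θ in (-Real.pi)..Real.pi,
      ‖1 - (ε : ℂ) * Complex.exp ((θ : ℂ) * Complex.I)‖ ^ (-p)) ^ (1 / p)

open Filter Topology Real intervalIntegral Finset

lemma Ring.choose_two_right {K : Type*} [Field K] [CharZero K] (a : K) :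
    Ring.choose a 2 = a * (a - 1) / 2 := by
  simp only [Ring.choose_eq_smul, Nat.factorial_two, Nat.cast_ofNat, descPochhammer_succ_right,
    descPochhammer_zero, CharP.cast_eq_zero, sub_zero, one_mul, Nat.cast_one,
    ← Polynomial.aeval_eq_smeval, map_mul, Polynomial.aeval_X, Polynomial.aeval_sub, map_one,
    smul_eq_mul]
  ring

noncomputable def binomialRemainder (a : ℝ) (n : ℕ) (x : ℝ) : ℝ :=
  (1 + x) ^ a - ∑ k ∈ range n, Ring.choose a k * x ^ k

lemma binomialRemainder_isBigO (a : ℝ) (n : ℕ) :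
    binomialRemainder a n =O[𝓝 0] fun x => x ^ n := by
  have := Real.one_add_rpow_hasFPowerSeriesAt_zero (a := a) |>.isBigO_sub_partialSum_pow n
  rw [← isBigO_abs_right]
  unfold binomialRemainder
  simpa [FormalMultilinearSeries.partialSum, binomialSeries,
    mul_comm (Ring.choose a _)] using this

lemma norm_one_sub_mul_exp_mul_I_sq (ε θ : ℝ) :
    ‖1 - (ε : ℂ) * Complex.exp (θ * I)‖ ^ 2 = 1 + (ε ^ 2 - 2 * ε * Real.cos θ) := by
  have hre_im : 1 - (ε : ℂ) * Complex.exp (θ * I) = ⟨1 - ε * Real.cos θ, -(ε * Real.sin θ)⟩ := by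
    apply Complex.ext <;> simp [Complex.exp_mul_I, Complex.cos_ofReal_re, Complex.sin_ofReal_re]
  rw [← Complex.normSq_eq_norm_sq, hre_im, Complex.normSq_mk]
  nlinarith [Real.sin_sq_add_cos_sq θ]

lemma norm_one_sub_mul_exp_mul_I_rpow (p ε θ : ℝ) :
    ‖1 - (ε : ℂ) * Complex.exp (θ * I)‖ ^ (-p) =
      (1 + (ε ^ 2 - 2 * ε * Real.cos θ)) ^ (-p / 2) := by
  rw [← norm_one_sub_mul_exp_mul_I_sq, ← Real.rpow_natCast, ← Real.rpow_mul (norm_nonneg _)]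
  norm_num [mul_div_cancel₀]

lemma abs_sq_sub_mul_cos_le {ε : ℝ} (hε : |ε| ≤ 1) (θ : ℝ) :
    |ε ^ 2 - 2 * ε * Real.cos θ| ≤ 3 * |ε| := by
  have hcos := Real.abs_cos_le_one θ
  calc |ε ^ 2 - 2 * ε * Real.cos θ| ≤ ε ^ 2 + 2 * |ε| * |Real.cos θ| := by
        have := abs_sub (ε ^ 2) (2 * ε * Real.cos θ)
        rwa [abs_of_nonneg (sq_nonneg ε), abs_mul, abs_mul, abs_two] at this
    _ ≤ |ε| * 1 + 2 * |ε| * 1 := by gcongr; nlinarith [sq_abs ε, abs_nonneg ε]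
    _ = 3 * |ε| := by ring

lemma integral_cubic_cos (A B C D : ℝ) :
    ∫ θ in (-π)..π, (A + B * Real.cos θ + C * Real.cos θ ^ 2 + D * Real.cos θ ^ 3) =
      2 * π * A + π * C := by
  rw [integral_add, integral_add, integral_add, integral_const_mul, integral_const_mul,
    integral_const_mul]
  · simp only [integral_const, smul_eq_mul, integral_cos, integral_cos_sq, integral_cos_pow_three,
      Real.sin_pi, Real.sin_neg, Real.cos_pi, Real.cos_neg]
    ring
  all_goals apply Continuous.intervalIntegrable; fun_prop

lemma integral_sum_range_four_mul_sq_sub_mul_cos_pow (c : ℕ → ℝ) (ε : ℝ) :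
    ∫ θ in (-π)..π, ∑ k ∈ range 4, c k * (ε ^ 2 - 2 * ε * Real.cos θ) ^ k =
      2 * π * (c 0 + c 1 * ε ^ 2 + c 2 * (2 * ε ^ 2 + ε ^ 4) + c 3 * (6 * ε ^ 4 + ε ^ 6)) := by
  have hcubic : ∀ θ, ∑ k ∈ range 4, c k * (ε ^ 2 - 2 * ε * Real.cos θ) ^ k =
      (c 0 + c 1 * ε ^ 2 + c 2 * ε ^ 4 + c 3 * ε ^ 6)
        + (-2 * ε * c 1 - 4 * ε ^ 3 * c 2 - 6 * ε ^ 5 * c 3) * Real.cos θ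
        + (4 * ε ^ 2 * c 2 + 12 * ε ^ 4 * c 3) * Real.cos θ ^ 2
        + (-8 * ε ^ 3 * c 3) * Real.cos θ ^ 3 := by
    intro θ
    simp only [sum_range_succ, sum_range_zero]
    ring
  simp_rw [hcubic, integral_cubic_cos]
  ring

lemma isBigO_integral_comp_sq_sub_mul_cos {R : ℝ → ℝ} {n : ℕ}
    (hR : R =O[𝓝 0] fun x => x ^ n) :
    (fun ε => ∫ θ in (-π)..π, R (ε ^ 2 - 2 * ε * Real.cos θ)) =O[𝓝 0] fun ε => ε ^ n := by
  obtain ⟨C, hC0, hC⟩ := hR.exists_pos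
  obtain ⟨δ, hδ, hRδ⟩ := Metric.eventually_nhds_iff.1 hC.bound
  refine IsBigO.of_bound (C * 3 ^ n * (2 * π)) ?_
  filter_upwards [Metric.ball_mem_nhds (0 : ℝ) (lt_min one_pos (div_pos hδ three_pos))]
    with ε hε
  rw [Metric.mem_ball, dist_zero_right, Real.norm_eq_abs, lt_min_iff] at hε
  have hbound : ∀ θ, ‖R (ε ^ 2 - 2 * ε * Real.cos θ)‖ ≤ C * 3 ^ n * |ε| ^ n := by
    intro θ
    have hx := abs_sq_sub_mul_cos_le hε.1.le θ
    calc ‖R (ε ^ 2 - 2 * ε * Real.cos θ)‖ ≤ C * ‖(ε ^ 2 - 2 * ε * Real.cos θ) ^ n‖ :=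
          hRδ (by rw [dist_zero_right, Real.norm_eq_abs]; linarith)
      _ ≤ C * (3 * |ε|) ^ n := by rw [norm_pow, Real.norm_eq_abs]; gcongr
      _ = C * 3 ^ n * |ε| ^ n := by ring
  calc ‖∫ θ in (-π)..π, R (ε ^ 2 - 2 * ε * Real.cos θ)‖
      ≤ C * 3 ^ n * |ε| ^ n * |π - -π| := norm_integral_le_of_norm_le_const fun θ _ => hbound θ
    _ = C * 3 ^ n * (2 * π) * ‖ε ^ n‖ := by
        rw [norm_pow, Real.norm_eq_abs, abs_of_pos (by linarith [pi_pos] : 0 < π - -π)]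
        ring

lemma integral_norm_one_sub_mul_exp_mul_I_rpow {ε : ℝ} (hε : |ε| < 1 / 3) (p : ℝ) :
    ∫ θ in (-π)..π, ‖1 - (ε : ℂ) * Complex.exp (θ * I)‖ ^ (-p) =
      2 * π * (1 + p ^ 2 / 4 * ε ^ 2
        + (Ring.choose (-p / 2) 2 + 6 * Ring.choose (-p / 2) 3) * ε ^ 4
        + Ring.choose (-p / 2) 3 * ε ^ 6)
      + ∫ θ in (-π)..π, binomialRemainder (-p / 2) 4 (ε ^ 2 - 2 * ε * Real.cos θ) := by
  have hbase : ∀ θ, 1 + (ε ^ 2 - 2 * ε * Real.cos θ) ≠ 0 := fun θ => by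
    have := abs_sq_sub_mul_cos_le (by linarith) θ
    have := neg_abs_le (ε ^ 2 - 2 * ε * Real.cos θ)
    linarith
  have hsplit : ∀ θ : ℝ, ‖1 - (ε : ℂ) * Complex.exp (θ * I)‖ ^ (-p) =
      ∑ k ∈ range 4, Ring.choose (-p / 2) k * (ε ^ 2 - 2 * ε * Real.cos θ) ^ k
        + binomialRemainder (-p / 2) 4 (ε ^ 2 - 2 * ε * Real.cos θ) := fun θ => by
    rw [norm_one_sub_mul_exp_mul_I_rpow, binomialRemainder, add_sub_cancel]
  simp_rw [hsplit]
  rw [integral_add, integral_sum_range_four_mul_sq_sub_mul_cos_pow, Ring.choose_zero_right,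
    Ring.choose_one_right, Ring.choose_two_right]
  · ring
  · exact Continuous.intervalIntegrable (by fun_prop) _ _
  · exact Continuous.intervalIntegrable
      (((by fun_prop : Continuous fun θ => 1 + (ε ^ 2 - 2 * ε * Real.cos θ)).rpow_const
        fun θ => Or.inl (hbase θ)).sub (by fun_prop)) _ _

noncomputable def NpPow (p ε : ℝ) : ℝ :=
  (1 / (2 * Real.pi)) * ∫ θ in (-Real.pi)..Real.pi,
      ‖1 - (ε : ℂ) * Complex.exp ((θ : ℂ) * Complex.I)‖ ^ (-p)

lemma Np_eq_NpPow_rpow (p ε : ℝ) : Np p ε = NpPow p ε ^ (1 / p) := rfl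

lemma NpPow_sub_isBigO (p : ℝ) :
    (fun ε => NpPow p ε - 1 - p ^ 2 / 4 * ε ^ 2) =O[𝓝 0] fun ε => ε ^ 4 := by
  have hexpand : ∀ᶠ ε in 𝓝 (0 : ℝ), NpPow p ε - 1 - p ^ 2 / 4 * ε ^ 2 =
      ((Ring.choose (-p / 2) 2 + 6 * Ring.choose (-p / 2) 3) * ε ^ 4
          + Ring.choose (-p / 2) 3 * ε ^ 6)
        + 1 / (2 * π) * ∫ θ in (-π)..π,
            binomialRemainder (-p / 2) 4 (ε ^ 2 - 2 * ε * Real.cos θ) := by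
    filter_upwards [Metric.ball_mem_nhds (0 : ℝ) (by norm_num : (0 : ℝ) < 1 / 3)] with ε hε
    rw [Metric.mem_ball, dist_zero_right, Real.norm_eq_abs] at hε
    rw [NpPow, integral_norm_one_sub_mul_exp_mul_I_rpow hε]
    field_simp
    ring
  refine IsBigO.congr' ?_ (hexpand.mono fun _ h => h.symm) EventuallyEq.rfl
  refine ((isBigO_const_mul_self _ _ _).add ?_).add ?_
  · exact (isLittleO_pow_pow (by norm_num)).isBigO.const_mul_left _
  · exact (isBigO_integral_comp_sq_sub_mul_cos (binomialRemainder_isBigO _ 4)).const_mul_left _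

/-- `N_p(ε) = 1 + (p/4)ε² + O(ε⁴)` as `ε → 0⁺`. -/
theorem np_expansion (p : ℝ) (hp : 0 < p) :
    (fun ε : ℝ => Np p ε - 1 - (p / 4) * ε ^ 2) =O[nhdsWithin 0 (Set.Ioi 0)]
      fun ε : ℝ => ε ^ 4 := by
  set t : ℝ → ℝ := fun ε => NpPow p ε - 1
  have hNpPow := NpPow_sub_isBigO p
  have ht : t =O[𝓝 0] fun ε => ε ^ 2 :=
    ((hNpPow.trans (isLittleO_pow_pow (by norm_num)).isBigO).add
      (isBigO_const_mul_self (p ^ 2 / 4) _ _)).congr_left fun ε => by ring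
  have ht0 : Tendsto t (𝓝 0) (𝓝 0) :=
    ht.trans_tendsto (by simpa using (continuous_pow 2).tendsto (0 : ℝ))
  have hroot : (binomialRemainder (1 / p) 2 ∘ t) =O[𝓝 0] fun ε => ε ^ 4 :=
    ((binomialRemainder_isBigO (1 / p) 2).comp_tendsto ht0).trans
      ((ht.pow 2).congr_right fun ε => by ring)
  refine IsBigO.mono ?_ nhdsWithin_le_nhds
  refine (hroot.add (hNpPow.const_mul_left (1 / p))).congr_left fun ε => ?_
  simp only [Function.comp_apply, t, binomialRemainder, Np_eq_NpPow_rpow, add_sub_cancel,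
    sum_range_succ, sum_range_zero, Ring.choose_zero_right, Ring.choose_one_right]
  field_simp
  ring
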